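/- arXiv:1701.06673 — 3 statements merged into one kernel-verified Lean document; each statement's English description precedes it below -/
import Mathlib

section
/- For μ_t ∈ [0,1], K_r ≥ 2, and r ≥ 1-μ_t^2, the pipelined decentralized NDT δ_P^dec = K_r/2 matches the cut-set lower bound max{ K_r(1-2μ_t)/(2r), (K_r(1-μ_t)+μ_t)/(1+r), K_r/2 }; i.e., K_r/2 ≥ K_r(1-2μ_t)/(2r) and K_r/2 ≥ (K_r(1-μ_t)+μ_t)/(1+r) when r ≥ 1-μ_t^2. -/
theorem pipelined_optimal_high_fronthaul (μt r : ℝ) (hμt : μt ∈ Set.Icc (0:ℝ) 1)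
    (Kr : ℕ) (hKr : 2 ≤ Kr) (hr : 1 - μt ^ 2 ≤ r) (hr0 : 0 < r) :
    (Kr : ℝ) * (1 - 2 * μt) / (2 * r) ≤ (Kr : ℝ) / 2 ∧
    ((Kr : ℝ) * (1 - μt) + μt) / (1 + r) ≤ (Kr : ℝ) / 2 := by
  obtain ⟨h0, h1⟩ := hμt
  have hK : (2:ℝ) ≤ (Kr:ℝ) := by exact_mod_cast hKr
  constructor
  · rw [div_le_div_iff₀ (by linarith) (by norm_num)]
    nlinarith [mul_nonneg (mul_nonneg (by linarith : (0:ℝ) ≤ (Kr:ℝ)) h0) (by linarith : (0:ℝ) ≤ 2 - μt)]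
  · rw [div_le_div_iff₀ (by linarith) (by norm_num)]
    nlinarith [mul_nonneg (mul_nonneg (by linarith : (0:ℝ) ≤ (Kr:ℝ) - 2) h0) (by linarith : (0:ℝ) ≤ 2 - μt)]
end

section
/- For μ_t ∈ [0, √2 - 1], 0 < r < 1, and K_r ≥ 2: (K_r/2)·[(1-μ_t)^2/r + 1] + μ_t·(1-μ_t) ≤ 2·[ (K_r/(2r))·(1-2μ_t) + K_r/2 + μ_t ]. -/
/-! Clearing the denominator `r`, twice the lower bound exceeds the achievable latency by
`(K_r / (2r)) (2 - (1 + μ_t)²) + K_r / 2 + μ_t (1 + μ_t)`, and every term is nonnegative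
exactly because `μ_t + 1 ≤ √2`. -/

lemma sq_add_one_le_two {μ : ℝ} (h0 : -1 ≤ μ) (h1 : μ ≤ Real.sqrt 2 - 1) : (μ + 1) ^ 2 ≤ 2 := by
  calc (μ + 1) ^ 2 ≤ Real.sqrt 2 ^ 2 := by gcongr <;> linarith
    _ = 2 := Real.sq_sqrt zero_le_two

lemma two_mul_serial_bound_sub_eq (K μ : ℝ) {r : ℝ} (hr : r ≠ 0) :
    2 * (K / (2 * r) * (1 - 2 * μ) + K / 2 + μ) - (K / 2 * ((1 - μ) ^ 2 / r + 1) + μ * (1 - μ))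
      = K / (2 * r) * (2 - (μ + 1) ^ 2) + K / 2 + μ * (μ + 1) := by
  field_simp
  ring

theorem serial_gap_low_r_general (μt r : ℝ) (hμt : μt ∈ Set.Icc (0:ℝ) (Real.sqrt 2 - 1))
    (hr : r ∈ Set.Ioo (0:ℝ) 1) (Kr : ℕ) :
    ((Kr : ℝ) / 2) * ((1 - μt) ^ 2 / r + 1) + μt * (1 - μt)
      ≤ 2 * ((Kr : ℝ) / (2 * r) * (1 - 2 * μt) + (Kr : ℝ) / 2 + μt) := by
  obtain ⟨hμ0, hμ1⟩ := hμt
  have hsq : 0 ≤ 2 - (μt + 1) ^ 2 := sub_nonneg.2 (sq_add_one_le_two (by linarith) hμ1)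
  obtain ⟨hr0, -⟩ := hr
  rw [← sub_nonneg, two_mul_serial_bound_sub_eq _ _ hr0.ne']
  positivity

theorem serial_gap_low_r (μt r : ℝ) (hμt : μt ∈ Set.Icc (0:ℝ) (Real.sqrt 2 - 1))
    (hr : r ∈ Set.Ioo (0:ℝ) 1) (Kr : ℕ) (hKr : 2 ≤ Kr) :
    ((Kr : ℝ) / 2) * ((1 - μt) ^ 2 / r + 1) + μt * (1 - μt)
      ≤ 2 * ((Kr : ℝ) / (2 * r) * (1 - 2 * μt) + (Kr : ℝ) / 2 + μt) :=
  serial_gap_low_r_general μt r hμt hr Kr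
end

section
/- For μ_t ∈ [0, √2-1] and r ∈ (0,1), K_r ≥ 2: μ_t^2·K_r/(2r) - μ_t^2 ≤ (K_r/(2r))·(1-2μ_t) + K_r/2 + μ_t; equivalently the ratio (μ_t^2·K_r/(2r) - μ_t^2)/[(K_r/(2r))(1-2μ_t) + K_r/2 + μ_t] ≤ 1. -/
theorem key_ratio_step (μt r : ℝ) (hμt : μt ∈ Set.Icc (0:ℝ) (Real.sqrt 2 - 1))
    (hr : r ∈ Set.Ioo (0:ℝ) 1) (Kr : ℕ) (hKr : 2 ≤ Kr) :
    μt ^ 2 * (Kr : ℝ) / (2 * r) - μt ^ 2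
      ≤ (Kr : ℝ) / (2 * r) * (1 - 2 * μt) + (Kr : ℝ) / 2 + μt ∧
    (μt ^ 2 * (Kr : ℝ) / (2 * r) - μt ^ 2) /
      ((Kr : ℝ) / (2 * r) * (1 - 2 * μt) + (Kr : ℝ) / 2 + μt) ≤ 1 := by
  obtain ⟨h0, h1⟩ := hμt
  obtain ⟨hr0, hr1⟩ := hr
  have hs : Real.sqrt 2 ^ 2 = 2 := Real.sq_sqrt (by norm_num)
  have hsq : μt ^ 2 ≤ 1 - 2 * μt := by nlinarith [Real.sqrt_nonneg 2]
  have hK : (2:ℝ) ≤ (Kr:ℝ) := by exact_mod_cast hKr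
  have ha : (0:ℝ) < (Kr:ℝ)/(2*r) := by positivity
  have key : μt ^ 2 * (Kr : ℝ) / (2 * r) - μt ^ 2
      ≤ (Kr : ℝ) / (2 * r) * (1 - 2 * μt) + (Kr : ℝ) / 2 + μt := by
    have h2 : (Kr:ℝ)/(2*r) * (μt^2) ≤ (Kr:ℝ)/(2*r) * (1 - 2*μt) :=
      mul_le_mul_of_nonneg_left hsq ha.le
    have h3 : μt ^ 2 * (Kr : ℝ) / (2 * r) = (Kr:ℝ)/(2*r) * (μt^2) := by ring
    nlinarith [sq_nonneg μt]
  refine ⟨key, ?_⟩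
  have hden : 0 < (Kr : ℝ) / (2 * r) * (1 - 2 * μt) + (Kr : ℝ) / 2 + μt := by
    have : 0 ≤ (Kr:ℝ)/(2*r) * (1 - 2*μt) := by
      apply mul_nonneg ha.le; nlinarith [sq_nonneg μt]
    nlinarith
  rw [div_le_one hden]
  linarith
end
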